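/- Let p ≥ 3 be a prime and let μ be a probability distribution on F_p supported on more than one value. For any r ≥ 1 and ε > 0, there exists K ∈ ℕ such that the following holds for all m, n ≥ 1. Let M ∈ F_p^{m×n} be a matrix and let I_1,…,I_K ⊆ {1,…,n} be pairwise disjoint sets such that for each i = 1,…,K, the m×|I_i| submatrix of M consisting of the columns indexed by I_i has rank at least r. Let x ∈ F_p^n be a random vector with independent μ-distributed entries. Then Pr[Mx = 0] ≤ p^{-r} + ε. -/

import Mathlib

/-!
Write `φ t = ∑ z, μ z • ψ (t * z)` for the characteristic function of `μ`, with `ψ` the standard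
additive character of `𝔽_p`. Orthogonality of characters gives the Fourier identity
`p ^ m * Pr[M x = 0] = ∑ ξ, ∏ j, φ ((ξ ᵥ* M) j)`. Since `μ` is not a point mass and `ψ` is
injective, strict convexity of the complex norm gives `‖φ t‖ ≤ ρ < 1` for all `t ≠ 0`.
Bounding the factors outside the blocks `I i` by `1` and applying AM-GM to the `K` block products
`g i ξ = ∏ j ∈ I i, ‖φ ((ξ ᵥ* M) j)‖` reduces the claim to
`∑ ξ, g i ξ ^ K ≤ p ^ m * (p⁻¹ ^ r + ρ ^ K)` for a single block. There `g i ξ ≤ 1` on the left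
kernel of the block, which has at most `p ^ (m - r)` elements by rank-nullity, and `g i ξ ≤ ρ`
off it.
-/

open Finset Matrix

theorem AddChar.map_sum_eq_prod {A M ι : Type*} [AddCommMonoid A] [CommMonoid M]
    (ψ : AddChar A M) (s : Finset ι) (f : ι → A) :
    ψ (∑ i ∈ s, f i) = ∏ i ∈ s, ψ (f i) := by
  classical
  induction s using Finset.induction_on with
  | empty => simp
  | insert a s h ih => rw [sum_insert h, prod_insert h, ψ.map_add_eq_mul, ih]

theorem Finset.prod_le_prod_prod_of_pairwise_disjoint {κ η R : Type*} [Fintype κ] [Fintype η]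
    [CommMonoidWithZero R] [PartialOrder R] [ZeroLEOneClass R] [PosMulMono R] {f : κ → R}
    (h0 : ∀ j, 0 ≤ f j) (h1 : ∀ j, f j ≤ 1) {I : η → Finset κ}
    (hI : ∀ i j, i ≠ j → Disjoint (I i) (I j)) :
    ∏ j, f j ≤ ∏ i, ∏ j ∈ I i, f j := by
  classical
  rw [← prod_biUnion fun i _ j _ hij => hI i j hij]
  exact prod_le_prod_of_subset_of_le_one (subset_univ _) (fun j _ => h0 j) fun j _ _ => h1 j

theorem Real.prod_le_sum_pow_card_div_card {η : Type*} [Fintype η] [Nonempty η] {a : η → ℝ}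
    (ha : ∀ i, 0 ≤ a i) :
    ∏ i, a i ≤ (∑ i, a i ^ Fintype.card η) / Fintype.card η := by
  have hk : Fintype.card η ≠ 0 := Fintype.card_ne_zero
  have hw : ∑ _i : η, ((Fintype.card η : ℝ))⁻¹ = 1 := by
    rw [sum_const, card_univ, nsmul_eq_mul, mul_inv_cancel₀ (Nat.cast_ne_zero.2 hk)]
  have amgm := Real.geom_mean_le_arith_mean_weighted univ (fun _ => ((Fintype.card η : ℝ))⁻¹)
    (fun i => a i ^ Fintype.card η) (fun _ _ => by positivity) hw
    (fun i _ => pow_nonneg (ha i) _)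
  simp_rw [Real.pow_rpow_inv_natCast (ha _) hk, ← mul_sum, inv_mul_eq_div] at amgm
  exact amgm

theorem Matrix.card_vecMul_eq_zero_mul_pow_rank {F ι κ : Type*} [Field F] [Fintype F]
    [Fintype ι] [Fintype κ] [DecidableEq F] [DecidableEq ι] (A : Matrix ι κ F) :
    #{ξ : ι → F | ξ ᵥ* A = 0} * Fintype.card F ^ A.rank = Fintype.card F ^ Fintype.card ι := by
  classical
  have hker : #{ξ : ι → F | ξ ᵥ* A = 0} = Fintype.card (LinearMap.ker A.vecMulLinear) := by
    rw [← Fintype.card_subtype]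
    exact Fintype.card_congr (Equiv.subtypeEquivRight fun ξ => by simp)
  rw [hker, Module.card_eq_pow_finrank (K := F), ← pow_add, ← rank_transpose, rank,
    mulVecLin_transpose, add_comm, LinearMap.finrank_range_add_finrank_ker,
    Module.finrank_fintype_fun_eq_card]

section Characters

variable {R : Type*} [CommRing R] [Fintype R] {ψ : AddChar R ℂ}
  {ι κ : Type*} [Fintype ι] [Fintype κ] [DecidableEq ι] [DecidableEq κ]

theorem AddChar.sum_apply_dotProduct [DecidableEq R] (hψ : ψ.IsPrimitive) (y : ι → R) :
    ∑ ξ : ι → R, ψ (ξ ⬝ᵥ y) = if y = 0 then (Fintype.card R : ℂ) ^ Fintype.card ι else 0 := by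
  simp_rw [dotProduct, ψ.map_sum_eq_prod]
  rw [← Fintype.prod_sum fun k t => ψ (t * y k)]
  simp_rw [AddChar.sum_mulShift _ hψ]
  split_ifs with hy
  · simp [hy]
  · obtain ⟨k, hk⟩ := Function.ne_iff.1 hy
    exact prod_eq_zero (mem_univ k) (by simpa using hk)

noncomputable def weightedCharSum (ψ : AddChar R ℂ) (μ : R → ℝ) (t : R) : ℂ :=
  ∑ z, μ z • ψ (t * z)

variable {μ : R → ℝ}

theorem norm_weightedCharSum_le_one (hμ0 : ∀ z, 0 ≤ μ z) (hμ1 : ∑ z, μ z = 1) (t : R) :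
    ‖weightedCharSum ψ μ t‖ ≤ 1 :=
  calc ‖weightedCharSum ψ μ t‖ ≤ ∑ z, ‖μ z • ψ (t * z)‖ := norm_sum_le _ _
    _ = 1 := by simp [abs_of_nonneg (hμ0 _), hμ1]

theorem prod_weightedCharSum (c : ι → R) :
    ∏ j, weightedCharSum ψ μ (c j) = ∑ x : ι → R, (∏ j, (μ (x j) : ℂ)) * ψ (c ⬝ᵥ x) := by
  simp_rw [weightedCharSum, Fintype.prod_sum, dotProduct, ψ.map_sum_eq_prod, Complex.real_smul,
    prod_mul_distrib]

theorem sum_prod_weightedCharSum_vecMul [DecidableEq R] (hψ : ψ.IsPrimitive) (M : Matrix ι κ R) :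
    ∑ ξ : ι → R, ∏ j, weightedCharSum ψ μ ((ξ ᵥ* M) j) =
      (Fintype.card R : ℂ) ^ Fintype.card ι * ∑ x : κ → R with M *ᵥ x = 0, ∏ j, (μ (x j) : ℂ) := by
  simp_rw [prod_weightedCharSum, ← dotProduct_mulVec]
  rw [sum_comm]
  simp_rw [← mul_sum, AddChar.sum_apply_dotProduct hψ, sum_filter, mul_sum]
  refine sum_congr rfl fun x _ => ?_
  split_ifs <;> simp [mul_comm]

theorem sum_filter_mulVec_eq_zero_mul_le [DecidableEq R] (hψ : ψ.IsPrimitive)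
    (hμ0 : ∀ z, 0 ≤ μ z) (M : Matrix ι κ R) :
    (∑ x : κ → R with M *ᵥ x = 0, ∏ j, μ (x j)) * Fintype.card R ^ Fintype.card ι ≤
      ∑ ξ : ι → R, ∏ j, ‖weightedCharSum ψ μ ((ξ ᵥ* M) j)‖ := by
  have hP : 0 ≤ ∑ x : κ → R with M *ᵥ x = 0, ∏ j, μ (x j) :=
    sum_nonneg fun x _ => prod_nonneg fun j _ => hμ0 (x j)
  calc _ = ‖∑ ξ : ι → R, ∏ j, weightedCharSum ψ μ ((ξ ᵥ* M) j)‖ := by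
        rw [sum_prod_weightedCharSum_vecMul hψ, norm_mul, mul_comm]
        norm_cast
        rw [Real.norm_of_nonneg hP]
    _ ≤ _ := (norm_sum_le _ _).trans_eq (sum_congr rfl fun ξ _ => norm_prod _ _)

end Characters

section FiniteField

variable {F : Type*} [Field F] [Fintype F] {ψ : AddChar F ℂ} {μ : F → ℝ}

theorem norm_weightedCharSum_lt_one (hψ : Function.Injective ψ) (hμ0 : ∀ z, 0 ≤ μ z)
    (hμ1 : ∑ z, μ z = 1) (hμsupp : ∃ a b : F, a ≠ b ∧ μ a ≠ 0 ∧ μ b ≠ 0) {t : F} (ht : t ≠ 0) :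
    ‖weightedCharSum ψ μ t‖ < 1 := by
  obtain ⟨a, b, hab, ha, hb⟩ := hμsupp
  exact norm_sum_lt_of_strictConvexSpace (fun z _ => hμ0 z) hμ1 (mem_univ a) (mem_univ b)
    (hψ.ne ((mul_right_injective₀ ht).ne hab)) ha hb fun z _ => (ψ.norm_apply _).le

theorem exists_norm_weightedCharSum_le_of_ne_zero (hψ : Function.Injective ψ)
    (hμ0 : ∀ z, 0 ≤ μ z) (hμ1 : ∑ z, μ z = 1) (hμsupp : ∃ a b : F, a ≠ b ∧ μ a ≠ 0 ∧ μ b ≠ 0) :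
    ∃ ρ, 0 ≤ ρ ∧ ρ < 1 ∧ ∀ t ≠ 0, ‖weightedCharSum ψ μ t‖ ≤ ρ := by
  classical
  obtain ⟨t₀, ht₀, hmax⟩ := (univ.erase (0 : F)).exists_max_image
    (fun t => ‖weightedCharSum ψ μ t‖) ⟨1, mem_erase.2 ⟨one_ne_zero, mem_univ _⟩⟩
  exact ⟨_, norm_nonneg _, norm_weightedCharSum_lt_one hψ hμ0 hμ1 hμsupp (ne_of_mem_erase ht₀),
    fun t ht => hmax t (mem_erase.2 ⟨ht, mem_univ t⟩)⟩

end FiniteField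

section Anticoncentration

variable {F : Type*} [Field F] [Fintype F] [DecidableEq F] {ψ : AddChar F ℂ} {μ : F → ℝ} {ρ : ℝ}
  {ι κ : Type*} [Fintype ι] [DecidableEq ι]

theorem sum_prod_norm_weightedCharSum_pow_le (hμ0 : ∀ z, 0 ≤ μ z) (hμ1 : ∑ z, μ z = 1)
    (hρ0 : 0 ≤ ρ) (hρ : ∀ t ≠ 0, ‖weightedCharSum ψ μ t‖ ≤ ρ) (M : Matrix ι κ F) (s : Finset κ)
    {r : ℕ} (hr : r ≤ (M.submatrix id fun j : s => (j : κ)).rank) (k : ℕ) :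
    ∑ ξ : ι → F, (∏ j ∈ s, ‖weightedCharSum ψ μ ((ξ ᵥ* M) j)‖) ^ k ≤
      Fintype.card F ^ Fintype.card ι * ((Fintype.card F : ℝ)⁻¹ ^ r + ρ ^ k) := by
  set A := M.submatrix id fun j : s => (j : κ)
  set g := fun ξ : ι → F => ∏ j ∈ s, ‖weightedCharSum ψ μ ((ξ ᵥ* M) j)‖
  have hnorm0 : ∀ ξ, ∀ j ∈ s, 0 ≤ ‖weightedCharSum ψ μ ((ξ ᵥ* M) j)‖ := fun _ _ _ => norm_nonneg _
  have hnorm1 : ∀ ξ, ∀ j ∈ s, ‖weightedCharSum ψ μ ((ξ ᵥ* M) j)‖ ≤ 1 :=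
    fun _ _ _ => norm_weightedCharSum_le_one hμ0 hμ1 _
  have hpoint : ∀ ξ, g ξ ^ k ≤ (if ξ ᵥ* A = 0 then 1 else 0) + ρ ^ k := by
    intro ξ
    have hg0 : 0 ≤ g ξ := prod_nonneg (hnorm0 ξ)
    split_ifs with hξ
    · linarith [pow_le_one₀ (n := k) hg0 (prod_le_one (hnorm0 ξ) (hnorm1 ξ)), pow_nonneg hρ0 k]
    · obtain ⟨j, hj⟩ := Function.ne_iff.1 hξ
      rw [zero_add]
      refine pow_le_pow_left₀ hg0 ?_ k
      calc g ξ ≤ ∏ i ∈ {(j : κ)}, ‖weightedCharSum ψ μ ((ξ ᵥ* M) i)‖ :=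
            prod_le_prod_of_subset_of_le_one (singleton_subset_iff.2 j.2) (hnorm0 ξ)
              fun i hi _ => hnorm1 ξ i hi
        _ ≤ ρ := by
            rw [prod_singleton]
            exact hρ _ (by simpa [A, vecMul, dotProduct] using hj)
  have hq : (1 : ℝ) ≤ Fintype.card F := by exact_mod_cast Fintype.card_pos
  have hker : (#{ξ : ι → F | ξ ᵥ* A = 0} : ℝ) ≤
      Fintype.card F ^ Fintype.card ι * (Fintype.card F : ℝ)⁻¹ ^ r := by
    have hcard := congrArg (Nat.cast (R := ℝ)) A.card_vecMul_eq_zero_mul_pow_rank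
    push_cast at hcard
    rw [← eq_div_iff (by positivity), div_eq_mul_inv] at hcard
    rw [hcard, inv_pow]
    gcongr
  calc ∑ ξ, g ξ ^ k ≤ ∑ ξ : ι → F, ((if ξ ᵥ* A = 0 then 1 else 0) + ρ ^ k) :=
        sum_le_sum fun ξ _ => hpoint ξ
    _ = #{ξ : ι → F | ξ ᵥ* A = 0} + Fintype.card F ^ Fintype.card ι * ρ ^ k := by
        simp [sum_add_distrib, sum_boole]
    _ ≤ _ := by rw [mul_add]; linarith

theorem sum_filter_mulVec_eq_zero_le (hψ : ψ.IsPrimitive) (hμ0 : ∀ z, 0 ≤ μ z)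
    (hμ1 : ∑ z, μ z = 1) (hρ0 : 0 ≤ ρ) (hρ : ∀ t ≠ 0, ‖weightedCharSum ψ μ t‖ ≤ ρ)
    [Fintype κ] [DecidableEq κ] {η : Type*} [Fintype η] [Nonempty η] (M : Matrix ι κ F)
    (I : η → Finset κ) (hI : ∀ i j, i ≠ j → Disjoint (I i) (I j)) {r : ℕ}
    (hr : ∀ i, r ≤ (M.submatrix id fun j : I i => (j : κ)).rank) :
    ∑ x : κ → F with M *ᵥ x = 0, ∏ j, μ (x j) ≤
      (Fintype.card F : ℝ)⁻¹ ^ r + ρ ^ Fintype.card η := by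
  set N : ℝ := Fintype.card F ^ Fintype.card ι
  set k := Fintype.card η
  set g := fun i (ξ : ι → F) => ∏ j ∈ I i, ‖weightedCharSum ψ μ ((ξ ᵥ* M) j)‖
  refine le_of_mul_le_mul_right ?_ (by positivity : 0 < N)
  calc _ ≤ ∑ ξ : ι → F, ∏ j, ‖weightedCharSum ψ μ ((ξ ᵥ* M) j)‖ :=
        sum_filter_mulVec_eq_zero_mul_le hψ hμ0 M
    _ ≤ ∑ ξ, ∏ i, g i ξ := sum_le_sum fun ξ _ =>
        prod_le_prod_prod_of_pairwise_disjoint (fun _ => norm_nonneg _)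
          (fun _ => norm_weightedCharSum_le_one hμ0 hμ1 _) hI
    _ ≤ ∑ ξ, (∑ i, g i ξ ^ k) / k := sum_le_sum fun ξ _ =>
        Real.prod_le_sum_pow_card_div_card fun i => prod_nonneg fun _ _ => norm_nonneg _
    _ = (∑ i, ∑ ξ, g i ξ ^ k) / k := by rw [← sum_div, sum_comm]
    _ ≤ (∑ _i : η, N * ((Fintype.card F : ℝ)⁻¹ ^ r + ρ ^ k)) / k := by
        gcongr with i
        exact sum_prod_norm_weightedCharSum_pow_le hμ0 hμ1 hρ0 hρ M (I i) (hr i) k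
    _ = _ := by
        rw [sum_const, card_univ, nsmul_eq_mul, mul_div_cancel_left₀ _ (by positivity), mul_comm]

end Anticoncentration

theorem robust_high_rank_anticoncentration_general (p : ℕ) [Fact p.Prime]
    (μ : ZMod p → ℝ) (hμ0 : ∀ z, 0 ≤ μ z) (hμ1 : ∑ z, μ z = 1)
    (hμsupp : ∃ a b : ZMod p, a ≠ b ∧ μ a ≠ 0 ∧ μ b ≠ 0)
    (r : ℕ) (ε : ℝ) (hε : 0 < ε) :
    ∃ K : ℕ, ∀ m n : ℕ, 1 ≤ m → 1 ≤ n →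
      ∀ M : Matrix (Fin m) (Fin n) (ZMod p),
      ∀ I : Fin K → Finset (Fin n),
        (∀ i j, i ≠ j → Disjoint (I i) (I j)) →
        (∀ i, r ≤ (M.submatrix id (fun j : ↥(I i) => (j : Fin n))).rank) →
        (∑ x ∈ Finset.univ.filter (fun x : Fin n → ZMod p => M.mulVec x = 0),
            ∏ i, μ (x i))
          ≤ ((p : ℝ))⁻¹ ^ r + ε := by
  obtain ⟨ρ, hρ0, hρ1, hρ⟩ :=
    exists_norm_weightedCharSum_le_of_ne_zero ZMod.injective_stdAddChar hμ0 hμ1 hμsupp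
  obtain ⟨K, hK⟩ := exists_pow_lt_of_lt_one hε hρ1
  refine ⟨K + 1, fun m n _ _ M I hI hr => ?_⟩
  calc _ ≤ (p : ℝ)⁻¹ ^ r + ρ ^ (K + 1) := by
        simpa using sum_filter_mulVec_eq_zero_le (ZMod.isPrimitive_stdAddChar p) hμ0 hμ1 hρ0 hρ
          M I hI hr
    _ ≤ _ := by
        gcongr
        exact (pow_le_pow_of_le_one hρ0 hρ1.le K.le_succ).trans hK.le

/-- Anticoncentration for robustly high-rank linear maps: for a prime `p ≥ 3`, a distribution
`μ` on `F_p` supported on more than one value, `r ≥ 1` and `ε > 0`, there is `K ∈ ℕ` such that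
for all `m, n ≥ 1`: if `M` is an `m × n` matrix over `F_p` and `I_1, …, I_K ⊆ {1,…,n}` are
pairwise disjoint column sets with `rank M[{1,…,m} × I_i] ≥ r` for each `i`, then for a random
vector `x` with independent `μ`-distributed entries, `Pr[Mx = 0] ≤ p^{-r} + ε`. -/
theorem robust_high_rank_anticoncentration (p : ℕ) [Fact p.Prime] (hp3 : 3 ≤ p)
    (μ : ZMod p → ℝ) (hμ0 : ∀ z, 0 ≤ μ z) (hμ1 : ∑ z, μ z = 1)
    (hμsupp : ∃ a b : ZMod p, a ≠ b ∧ μ a ≠ 0 ∧ μ b ≠ 0)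
    (r : ℕ) (hr : 1 ≤ r) (ε : ℝ) (hε : 0 < ε) :
    ∃ K : ℕ, ∀ m n : ℕ, 1 ≤ m → 1 ≤ n →
      ∀ M : Matrix (Fin m) (Fin n) (ZMod p),
      ∀ I : Fin K → Finset (Fin n),
        (∀ i j, i ≠ j → Disjoint (I i) (I j)) →
        (∀ i, r ≤ (M.submatrix id (fun j : ↥(I i) => (j : Fin n))).rank) →
        (∑ x ∈ Finset.univ.filter (fun x : Fin n → ZMod p => M.mulVec x = 0),
            ∏ i, μ (x i))
          ≤ ((p : ℝ))⁻¹ ^ r + ε :=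
  robust_high_rank_anticoncentration_general p μ hμ0 hμ1 hμsupp r ε hε
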